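/- arXiv:1112.0136 — 2 statements merged into one kernel-verified Lean document; each statement's English description precedes it below -/
import Mathlib

section
/- Fix Δ > 0. For a > 0 define L(a) = Σ_{i ∈ ℤ} 2·√(max(a² − (iΔ)², 0)), the total length of the chords cut by the horizontal lines {y = iΔ}, i ∈ ℤ, inside the closed disk of radius a centered at the origin. Then lim_{a→∞} L(a)/(π a²) = 1/Δ. -/
/-!
The line `y = iΔ` meets the disk of radius `a` in a chord of length `g(iΔ)`, where
`g(x) = 2√(a² - x²)⁺` is even, decreasing in `|x|` and has integral `πa²`. Comparing the
Riemann sum `Δ · Σᵢ g(iΔ)` of a monotone function with its integral costs at most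
`Δ · g(0) = 2aΔ`, so `L(a) = πa²/Δ + O(a)`, and dividing by `πa²` gives the limit `1/Δ`.
-/

open Real Filter Topology Finset intervalIntegral

theorem Function.Even.intervalIntegral_neg_eq_two_mul {f : ℝ → ℝ} (hf : Function.Even f)
    (hcont : Continuous f) (T : ℝ) :
    ∫ x in -T..T, f x = 2 * ∫ x in 0..T, f x := by
  have hreflect : ∫ x in -T..0, f x = ∫ x in 0..T, f x := by
    simpa [hf _] using (integral_comp_neg (a := 0) (b := T) f).symm
  rw [← integral_add_adjacent_intervals (hcont.intervalIntegrable _ _)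
    (hcont.intervalIntegrable _ _), hreflect]
  ring

section LatticeSum

variable {f : ℝ → ℝ} {N : ℕ}

theorem tsum_pnat_eq_sum_range_of_eq_zero (hN : ∀ x, (N : ℝ) ≤ x → f x = 0) :
    ∑' n : ℕ+, f n = ∑ i ∈ range N, f (i + 1) := by
  rw [tsum_pnat_eq_tsum_succ (f := fun n : ℕ => f n)]
  push_cast
  refine tsum_eq_sum fun i hi => hN _ ?_
  rw [mem_range, not_lt] at hi
  exact_mod_cast hi.trans (Nat.le_succ i)

theorem Function.Even.summable_int_of_eq_zero (hf : Function.Even f)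
    (hN : ∀ x, (N : ℝ) ≤ x → f x = 0) : Summable fun i : ℤ => f i := by
  refine summable_of_ne_finset_zero (s := Icc (-N : ℤ) N) fun i hi => ?_
  have hNi : (N : ℝ) ≤ |(i : ℝ)| := by
    rw [mem_Icc, not_and_or, not_le, not_le] at hi
    rcases hi with hi | hi
    · have : (i : ℝ) < -N := by exact_mod_cast hi
      rw [abs_of_neg (by linarith)]; linarith
    · have : (N : ℝ) < i := by exact_mod_cast hi
      rw [abs_of_pos (by linarith)]; linarith
  rcases abs_choice (i : ℝ) with h | h <;> rw [h] at hNi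
  · exact hN _ hNi
  · rw [← hf]; exact hN _ hNi

theorem Function.Even.abs_tsum_int_sub_two_mul_integral_le (hf : Function.Even f)
    (hanti : AntitoneOn f (Set.Icc 0 N)) (hN : ∀ x, (N : ℝ) ≤ x → f x = 0) :
    |∑' i : ℤ, f i - 2 * ∫ x in (0 : ℝ)..N, f x| ≤ f 0 := by
  have hsplit := tsum_int_eq_zero_add_two_mul_tsum_pnat (f := fun i : ℤ => f i)
    (fun i => by simpa using hf i) (hf.summable_int_of_eq_zero hN)
  simp only [Int.cast_zero, Int.cast_natCast, nsmul_eq_mul, Nat.cast_ofNat] at hsplit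
  rw [tsum_pnat_eq_sum_range_of_eq_zero hN] at hsplit
  have hanti' : AntitoneOn f (Set.Icc 0 (0 + N)) := by rwa [zero_add]
  have hsum_le : ∑ i ∈ range N, f (i + 1) ≤ ∫ x in (0 : ℝ)..N, f x := by
    simpa [add_comm] using hanti'.sum_le_integral
  have hint_le : ∫ x in (0 : ℝ)..N, f x ≤ ∑ i ∈ range N, f i := by
    simpa using hanti'.integral_le_sum
  have hshift : ∑ i ∈ range N, f i + f N = f 0 + ∑ i ∈ range N, f (i + 1) := by
    rw [← sum_range_succ (fun i : ℕ => f i), sum_range_succ']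
    push_cast
    ring
  rw [hsplit, abs_le]
  constructor <;> linarith [hN N le_rfl]

end LatticeSum

noncomputable def chordLength (r x : ℝ) : ℝ := 2 * √(max (r ^ 2 - x ^ 2) 0)

section Chord

variable {r x : ℝ}

theorem chordLength_of_le (hr : 0 ≤ r) (hx : r ≤ x) : chordLength r x = 0 := by
  have : r ^ 2 - x ^ 2 ≤ 0 := by nlinarith
  simp [chordLength, max_eq_right this]

theorem chordLength_of_abs_le (hx : |x| ≤ r) : chordLength r x = 2 * √(r ^ 2 - x ^ 2) := by
  have : 0 ≤ r ^ 2 - x ^ 2 := by nlinarith [sq_abs x, abs_nonneg x]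
  rw [chordLength, max_eq_left this]

theorem chordLength_zero_right (hr : 0 ≤ r) : chordLength r 0 = 2 * r := by
  simp [chordLength, sq_nonneg, Real.sqrt_sq hr]

theorem chordLength_even (r : ℝ) : Function.Even (chordLength r) := fun x => by
  simp [chordLength]

theorem continuous_chordLength (r : ℝ) : Continuous (chordLength r) := by
  unfold chordLength; fun_prop

theorem antitoneOn_chordLength (r : ℝ) : AntitoneOn (chordLength r) (Set.Ici 0) :=
  fun x hx y _ hxy => by
    have : x ^ 2 ≤ y ^ 2 := pow_le_pow_left₀ hx hxy 2
    unfold chordLength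
    gcongr

theorem chordLength_mul {c : ℝ} (hc : 0 ≤ c) (r x : ℝ) :
    chordLength (c * r) (c * x) = c * chordLength r x := by
  have hscale : max ((c * r) ^ 2 - (c * x) ^ 2) 0 = c ^ 2 * max (r ^ 2 - x ^ 2) 0 := by
    rw [mul_max_of_nonneg _ _ (sq_nonneg c), mul_zero]
    ring_nf
  rw [chordLength, chordLength, hscale, Real.sqrt_mul (sq_nonneg c), Real.sqrt_sq hc]
  ring

theorem integral_chordLength_one {T : ℝ} (hT : 1 ≤ T) :
    ∫ x in (0 : ℝ)..T, chordLength 1 x = π / 2 := by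
  have hdisk : ∫ x in (-1 : ℝ)..1, chordLength 1 x = π := by
    rw [integral_congr (g := fun x => 2 * √(1 - x ^ 2)), integral_const_mul,
      integral_sqrt_one_sub_sq]
    · ring
    · intro x hx
      rw [Set.uIcc_of_le (by norm_num), Set.mem_Icc, ← abs_le] at hx
      simpa using chordLength_of_abs_le hx
  have hhalf := (chordLength_even 1).intervalIntegral_neg_eq_two_mul (continuous_chordLength 1) 1
  have htail : ∫ x in (1 : ℝ)..T, chordLength 1 x = 0 := by
    rw [integral_congr (g := fun _ => 0), integral_zero]
    intro x hx
    rw [Set.uIcc_of_le hT] at hx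
    exact chordLength_of_le zero_le_one hx.1
  rw [← integral_add_adjacent_intervals ((continuous_chordLength 1).intervalIntegrable _ _)
    ((continuous_chordLength 1).intervalIntegrable _ _), htail]
  linarith

theorem integral_chordLength (hr : 0 < r) {T : ℝ} (hT : r ≤ T) :
    ∫ x in (0 : ℝ)..T, chordLength r x = π * r ^ 2 / 2 := by
  have hrescale : ∀ x, chordLength r x = r * chordLength 1 (x / r) := fun x => by
    rw [← chordLength_mul hr.le, mul_one, mul_div_cancel₀ x hr.ne']
  simp_rw [hrescale]
  rw [integral_const_mul, integral_comp_div _ hr.ne', zero_div,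
    integral_chordLength_one ((one_le_div hr).2 hT), smul_eq_mul]
  ring

end Chord

theorem abs_tsum_chordLength_sub_le {r : ℝ} (hr : 0 < r) :
    |∑' i : ℤ, chordLength r i - π * r ^ 2| ≤ 2 * r := by
  have hN : r ≤ ⌈r⌉₊ := Nat.le_ceil r
  have hbound := (chordLength_even r).abs_tsum_int_sub_two_mul_integral_le
    ((antitoneOn_chordLength r).mono Set.Icc_subset_Ici_self)
    (fun x hx => chordLength_of_le hr.le (hN.trans hx))
  rwa [integral_chordLength hr hN, chordLength_zero_right hr.le, mul_div_cancel₀ _ two_ne_zero]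
    at hbound

theorem abs_tsum_chordLength_mul_sub_le {a Δ : ℝ} (ha : 0 < a) (hΔ : 0 < Δ) :
    |∑' i : ℤ, chordLength a (i * Δ) - π * a ^ 2 / Δ| ≤ 2 * a := by
  have hrescale : ∀ i : ℤ, chordLength a (i * Δ) = Δ * chordLength (a / Δ) i := fun i => by
    rw [← chordLength_mul hΔ.le, mul_div_cancel₀ a hΔ.ne', mul_comm]
  have hlattice := abs_tsum_chordLength_sub_le (div_pos ha hΔ)
  calc |∑' i : ℤ, chordLength a (i * Δ) - π * a ^ 2 / Δ|
      = Δ * |∑' i : ℤ, chordLength (a / Δ) i - π * (a / Δ) ^ 2| := by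
        rw [tsum_congr hrescale, tsum_mul_left, ← abs_of_pos hΔ, ← abs_mul, abs_of_pos hΔ]
        congr 1
        field_simp
    _ ≤ Δ * (2 * (a / Δ)) := by gcongr
    _ = 2 * a := by field_simp

theorem stmt7 (Δ : ℝ) (hΔ : 0 < Δ) (L : ℝ → ℝ)
    (hL : ∀ a, L a = ∑' i : ℤ, 2 * Real.sqrt (max (a ^ 2 - ((i : ℝ) * Δ) ^ 2) 0)) :
    Filter.Tendsto (fun a => L a / (Real.pi * a ^ 2)) Filter.atTop (nhds (1 / Δ)) := by
  rw [tendsto_iff_norm_sub_tendsto_zero]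
  have hdecay : Tendsto (fun a : ℝ => 2 / π * a⁻¹) atTop (𝓝 0) := by
    simpa using tendsto_inv_atTop_zero.const_mul (2 / π)
  refine squeeze_zero' (Eventually.of_forall fun _ => norm_nonneg _) ?_ hdecay
  filter_upwards [eventually_gt_atTop 0] with a ha
  have hdisk : 0 < π * a ^ 2 := by positivity
  calc ‖L a / (π * a ^ 2) - 1 / Δ‖ = |L a - π * a ^ 2 / Δ| / (π * a ^ 2) := by
        rw [Real.norm_eq_abs, ← abs_of_pos hdisk, ← abs_div, abs_of_pos hdisk]
        congr 1
        field_simp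
    _ ≤ 2 * a / (π * a ^ 2) := by
        gcongr
        exact hL a ▸ abs_tsum_chordLength_mul_sub_le ha hΔ
    _ = 2 / π * a⁻¹ := by field_simp
end

section
/- Let N ≥ 1 and let 𝖭 ⊂ ℤ^N be a finite lattice-convex set (if a, b ∈ 𝖭 and δ ∈ (0,1) with δa + (1−δ)b ∈ ℤ^N, then δa + (1−δ)b ∈ 𝖭) that contains no translate of the unit cell 𝒰^N = {x ∈ ℤ^N : x_i ∈ {0,1} for all i}. Suppose v : 𝖭 → ℂ and nonzero coefficients τ_{i,m} ∈ ℂ∖{0} satisfy, for every n ∈ 𝖭 and every i ∈ {1,…,N}: Σ_{m ∈ 𝖬_{n,i}} τ_{i,m} v(m) = 0, where 𝖬_{n,i} = {m ∈ 𝖭 : m − n = k·eⁱ for some k ∈ ℤ} and eⁱ is the i-th standard basis vector. Then v(n) = 0 for all n ∈ 𝖭. -/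
/-!
Let `S` be the support of `v`. Since every `τ i m` is nonzero, the equation for `n ∈ S` in
direction `i` cannot have `v n` as its only nonzero term, so every point of `S` has another point
of `S` in each of its columns. Such a finite set forces a unit cell into its lattice-convex hull:
among the points of `S` with maximal `i`-th coordinate, each can be pushed one step down in
direction `i` by lattice convexity, and induction on the set of directions does the rest.
-/

open Finset

variable {ι : Type*}

def IsLatticeConvex (T : Set (ι → ℤ)) : Prop :=
  ∀ a ∈ T, ∀ b ∈ T, ∀ δ : ℝ, 0 < δ → δ < 1 →
    ∀ c : ι → ℤ, (∀ i, (c i : ℝ) = δ * (a i : ℝ) + (1 - δ) * (b i : ℝ)) → c ∈ T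

namespace IsLatticeConvex

variable {T T' : Set (ι → ℤ)}

theorem inter (hT : IsLatticeConvex T) (hT' : IsLatticeConvex T') :
    IsLatticeConvex (T ∩ T') :=
  fun a ha b hb δ h0 h1 c hc => ⟨hT a ha.1 b hb.1 δ h0 h1 c hc, hT' a ha.2 b hb.2 δ h0 h1 c hc⟩

theorem preimage_sub_const (hT : IsLatticeConvex T) (e : ι → ℤ) :
    IsLatticeConvex ((· - e) ⁻¹' T) := by
  intro a ha b hb δ h0 h1 c hc
  refine hT _ ha _ hb δ h0 h1 _ fun i => ?_
  simp only [Pi.sub_apply, Int.cast_sub, hc i]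
  ring

theorem sub_single_mem [DecidableEq ι] (hT : IsLatticeConvex T) {s s' : ι → ℤ} (hs : s ∈ T)
    (hs' : s' ∈ T) {i : ι} (hcol : ∀ j ≠ i, s' j = s j) (hlt : s' i < s i) :
    s - Pi.single i 1 ∈ T := by
  rcases (Int.add_one_le_iff.mpr hlt).eq_or_lt with hstep | hgap
  · convert hs' using 1
    funext j
    by_cases hji : j = i
    · subst hji; simp [← hstep]
    · simp [hji, hcol j hji]
  · -- `s - eᵢ = δ • s' + (1 - δ) • s` for `δ = 1 / (s i - s' i)`.
    have hk : (1 : ℝ) < (s i : ℝ) - s' i := by exact_mod_cast (by omega : (1 : ℤ) < s i - s' i)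
    refine hT s' hs' s hs (1 / ((s i : ℝ) - s' i)) (by positivity)
      ((div_lt_one (by linarith)).mpr hk) _ fun j => ?_
    by_cases hji : j = i
    · subst hji
      simp only [Pi.sub_apply, Pi.single_eq_same, Int.cast_sub, Int.cast_one]
      field_simp
      ring
    · simp only [Pi.sub_apply, Pi.single_eq_of_ne hji, sub_zero, hcol j hji]
      ring

theorem exists_cell_translate_subset [DecidableEq ι] (I : Finset ι) {T : Set (ι → ℤ)}
    (hT : IsLatticeConvex T) {S : Finset (ι → ℤ)} (hS : S.Nonempty) (hST : ↑S ⊆ T)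
    (hcol : ∀ s ∈ S, ∀ i ∈ I, ∃ s' ∈ S, s' ≠ s ∧ ∀ j ≠ i, s' j = s j) :
    ∃ z : ι → ℤ, ∀ x : ι → ℤ, (∀ i, x i = 0 ∨ x i = 1) → (∀ i ∉ I, x i = 0) → x + z ∈ T := by
  induction I using Finset.induction_on generalizing T S with
  | empty =>
    obtain ⟨s, hs⟩ := hS
    refine ⟨s, fun x _ hx => ?_⟩
    rw [show x = 0 from funext fun i => hx i (notMem_empty i), zero_add]
    exact hST hs
  | @insert i₀ I hi₀ ih =>
    obtain ⟨s₀, hs₀, hmax⟩ := S.exists_max_image (· i₀) hS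
    set S₁ := S.filter (· i₀ = s₀ i₀)
    set e : ι → ℤ := Pi.single i₀ 1
    -- The top layer `S₁` lies in the lattice-convex set `T ∩ (T + eᵢ₀)`, to which induction applies.
    have hS₁ : ↑S₁ ⊆ T ∩ (· - e) ⁻¹' T := by
      intro s hs
      obtain ⟨hsS, hsmax⟩ := mem_filter.mp hs
      obtain ⟨s', hs'S, hne, hcol'⟩ := hcol s hsS i₀ (mem_insert_self _ _)
      have hlt : s' i₀ < s i₀ := (hsmax ▸ hmax s' hs'S).lt_of_ne fun h =>
        hne (funext fun j => if hj : j = i₀ then hj ▸ h else hcol' j hj)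
      exact ⟨hST hsS, hT.sub_single_mem (hST hsS) (hST hs'S) hcol' hlt⟩
    have hcol₁ : ∀ s ∈ S₁, ∀ i ∈ I, ∃ s' ∈ S₁, s' ≠ s ∧ ∀ j ≠ i, s' j = s j := by
      intro s hs i hi
      obtain ⟨hsS, hsmax⟩ := mem_filter.mp hs
      obtain ⟨s', hs'S, hne, hcol'⟩ := hcol s hsS i (mem_insert_of_mem hi)
      have hi₀ : i₀ ≠ i := fun h => hi₀ (h ▸ hi)
      exact ⟨s', mem_filter.mpr ⟨hs'S, (hcol' i₀ hi₀).trans hsmax⟩, hne, hcol'⟩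
    have hs₀₁ : s₀ ∈ S₁ := mem_filter.mpr ⟨hs₀, rfl⟩
    obtain ⟨z, hz⟩ := ih (hT.inter (hT.preimage_sub_const e)) ⟨s₀, hs₀₁⟩ hS₁ hcol₁
    refine ⟨z - e, fun x hx hxI => ?_⟩
    have hxI' : ∀ i ∉ I, i ≠ i₀ → x i = 0 := fun i hi hi₀ => hxI i (by simp [hi, hi₀])
    rcases hx i₀ with h0 | h1
    · have hzx := (hz x hx fun i hi => if h : i = i₀ then h ▸ h0 else hxI' i hi h).2
      rwa [Set.mem_preimage, add_sub_assoc] at hzx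
    · have hxe : ∀ i, (x - e) i = 0 ∨ (x - e) i = 1 := fun i => by
        by_cases h : i = i₀ <;> simp [e, h, h1, hx i]
      have hxeI : ∀ i ∉ I, (x - e) i = 0 := fun i hi => by
        by_cases h : i = i₀ <;> simp [e, h, h1, hxI' i hi]
      have hzx := (hz (x - e) hxe hxeI).1
      rwa [sub_add_comm, add_comm] at hzx

end IsLatticeConvex

theorem Finset.exists_ne_ne_zero_of_sum_eq_zero {α M : Type*} [AddCommMonoid M] {A : Finset α}
    {f : α → M} (h : ∑ a ∈ A, f a = 0) {s : α} (hs : s ∈ A) (hfs : f s ≠ 0) :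
    ∃ a ∈ A, a ≠ s ∧ f a ≠ 0 := by
  by_contra! hA
  rw [sum_eq_single_of_mem s hs hA] at h
  exact hfs h

theorem stmt11_general (N : ℕ) (Ns : Finset (Fin N → ℤ))
    (hconv : ∀ a ∈ Ns, ∀ b ∈ Ns, ∀ δ : ℝ, 0 < δ → δ < 1 →
      ∀ c : Fin N → ℤ, (∀ i, (c i : ℝ) = δ * (a i : ℝ) + (1 - δ) * (b i : ℝ)) → c ∈ Ns)
    (hcell : ¬ ∃ z : Fin N → ℤ, ∀ x : Fin N → ℤ, (∀ i, x i = 0 ∨ x i = 1) → x + z ∈ Ns)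
    (v : (Fin N → ℤ) → ℂ) (τ : Fin N → (Fin N → ℤ) → ℂ)
    (hτ : ∀ i m, τ i m ≠ 0)
    (heq : ∀ n ∈ Ns, ∀ i : Fin N,
      ∑ m ∈ Ns.filter (fun m => ∀ j, j ≠ i → m j = n j), τ i m * v m = 0) :
    ∀ n ∈ Ns, v n = 0 := by
  classical
  intro n hn
  by_contra hv
  set S := Ns.filter (v · ≠ 0)
  have hcol : ∀ s ∈ S, ∀ i ∈ univ, ∃ s' ∈ S, s' ≠ s ∧ ∀ j ≠ i, s' j = s j := by
    intro s hs i _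
    obtain ⟨hsN, hvs⟩ := mem_filter.mp hs
    obtain ⟨m, hm, hms, hτv⟩ := exists_ne_ne_zero_of_sum_eq_zero (heq s hsN i)
      (mem_filter.mpr ⟨hsN, fun _ _ => rfl⟩) (mul_ne_zero (hτ i s) hvs)
    obtain ⟨hmN, hmcol⟩ := mem_filter.mp hm
    exact ⟨m, mem_filter.mpr ⟨hmN, right_ne_zero_of_mul hτv⟩, hms, hmcol⟩
  have hNs : IsLatticeConvex (Ns : Set (Fin N → ℤ)) := hconv
  obtain ⟨z, hz⟩ := hNs.exists_cell_translate_subset univ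
    ⟨n, mem_filter.mpr ⟨hn, hv⟩⟩ (fun s hs => (mem_filter.mp hs).1) hcol
  exact hcell ⟨z, fun x hx => hz x hx fun i hi => absurd (mem_univ i) hi⟩

theorem stmt11 (N : ℕ) (hN : 1 ≤ N) (Ns : Finset (Fin N → ℤ))
    (hconv : ∀ a ∈ Ns, ∀ b ∈ Ns, ∀ δ : ℝ, 0 < δ → δ < 1 →
      ∀ c : Fin N → ℤ, (∀ i, (c i : ℝ) = δ * (a i : ℝ) + (1 - δ) * (b i : ℝ)) → c ∈ Ns)
    (hcell : ¬ ∃ z : Fin N → ℤ, ∀ x : Fin N → ℤ, (∀ i, x i = 0 ∨ x i = 1) → x + z ∈ Ns)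
    (v : (Fin N → ℤ) → ℂ) (τ : Fin N → (Fin N → ℤ) → ℂ)
    (hτ : ∀ i m, τ i m ≠ 0)
    (heq : ∀ n ∈ Ns, ∀ i : Fin N,
      ∑ m ∈ Ns.filter (fun m => ∀ j, j ≠ i → m j = n j), τ i m * v m = 0) :
    ∀ n ∈ Ns, v n = 0 :=
  stmt11_general N Ns hconv hcell v τ hτ heq
end
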